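/- arXiv:2005.09989 — 2 statements merged into one kernel-verified Lean document; each statement's English description precedes it below -/
import Mathlib

section
/- Let ℓ : [0,T] × ℝⁿ × K → (0,∞) satisfy the strict subadditivity condition ℓ(t,x,ξ) + ℓ(t, x+ξ, ξ') - ℓ(t,x,ξ+ξ') ≥ δ₀ for all t, x, ξ, ξ' (with δ₀ > 0). Suppose V : [0,T] × ℝⁿ → ℝ and define N[V](t,x) = inf_{ξ ∈ K} (V(t, x+ξ) + ℓ(t,x,ξ)). If V(t₀,x₀) = N[V](t₀,x₀) = V(t₀, x₀+ξ₀) + ℓ(t₀,x₀,ξ₀) for some ξ₀ ∈ K, then N[V](t₀, x₀+ξ₀) - V(t₀, x₀+ξ₀) ≥ δ₀. -/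
theorem obstacle_gap_after_impulse {n : ℕ} (T δ₀ : ℝ) (hT : 0 < T) (hδ₀ : 0 < δ₀)
    (K : Set (EuclideanSpace ℝ (Fin n)))
    (hKclosed : IsClosed K) (hKconv : Convex ℝ K)
    (hKcone : ∀ x ∈ K, ∀ l : ℝ, 0 ≤ l → l • x ∈ K)
    (ℓ : ℝ → EuclideanSpace ℝ (Fin n) → EuclideanSpace ℝ (Fin n) → ℝ)
    (hℓpos : ∀ t ∈ Set.Icc (0:ℝ) T, ∀ x, ∀ ξ ∈ K, 0 < ℓ t x ξ)
    (hsub : ∀ t ∈ Set.Icc (0:ℝ) T, ∀ x, ∀ ξ ∈ K, ∀ ξ' ∈ K,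
      ℓ t x (ξ + ξ') + δ₀ ≤ ℓ t x ξ + ℓ t (x + ξ) ξ')
    (V : ℝ → EuclideanSpace ℝ (Fin n) → ℝ)
    (hbdd : ∀ t ∈ Set.Icc (0:ℝ) T, ∀ x,
      BddBelow {r : ℝ | ∃ ξ ∈ K, r = V t (x + ξ) + ℓ t x ξ})
    (t₀ : ℝ) (ht₀ : t₀ ∈ Set.Icc (0:ℝ) T) (x₀ : EuclideanSpace ℝ (Fin n))
    (ξ₀ : EuclideanSpace ℝ (Fin n)) (hξ₀ : ξ₀ ∈ K)
    (hmin : V t₀ x₀ = sInf {r : ℝ | ∃ ξ ∈ K, r = V t₀ (x₀ + ξ) + ℓ t₀ x₀ ξ})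
    (hatt : V t₀ x₀ = V t₀ (x₀ + ξ₀) + ℓ t₀ x₀ ξ₀) :
    δ₀ ≤ sInf {r : ℝ | ∃ ξ' ∈ K, r = V t₀ (x₀ + ξ₀ + ξ') + ℓ t₀ (x₀ + ξ₀) ξ'}
      - V t₀ (x₀ + ξ₀) := by
  have h0K : (0 : EuclideanSpace ℝ (Fin n)) ∈ K := by
    simpa using hKcone ξ₀ hξ₀ 0 le_rfl
  rw [le_sub_iff_add_le]
  refine le_csInf ⟨V t₀ (x₀ + ξ₀ + 0) + ℓ t₀ (x₀ + ξ₀) 0, 0, h0K, rfl⟩ ?_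
  rintro r ⟨ξ', hξ', rfl⟩
  -- ξ₀ + ξ' ∈ K
  have hsum : ξ₀ + ξ' ∈ K := by
    have h := hKconv hξ₀ hξ' (a := (1:ℝ)/2) (b := (1:ℝ)/2) (by norm_num) (by norm_num)
      (by norm_num)
    have h2 := hKcone _ h 2 (by norm_num)
    have : (2:ℝ) • ((1/2 : ℝ) • ξ₀ + (1/2 : ℝ) • ξ') = ξ₀ + ξ' := by
      rw [smul_add, smul_smul, smul_smul]; norm_num
    rwa [this] at h2
  have h1 : V t₀ x₀ ≤ V t₀ (x₀ + (ξ₀ + ξ')) + ℓ t₀ x₀ (ξ₀ + ξ') := by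
    rw [hmin]
    exact csInf_le (hbdd t₀ ht₀ x₀) ⟨ξ₀ + ξ', hsum, rfl⟩
  have h2 := hsub t₀ ht₀ x₀ ξ₀ hξ₀ ξ' hξ'
  have heq : x₀ + (ξ₀ + ξ') = x₀ + ξ₀ + ξ' := by abel
  rw [heq] at h1
  rw [hatt] at h1
  linarith
end

section
/- Let h(x) = 9(x - 2/5)² and F(b, X) = h(b) + 1 + |b - X| for b ∈ [0,1], X ∈ ℝ. Then min_{b ∈ [0,1]} F(b, X) = 247/180 - X if X < 31/90; = 9(X - 2/5)² + 1 if 31/90 ≤ X ≤ 41/90; = 103/180 + X if X > 41/90. -/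
theorem min_terminal_cost (h : ℝ → ℝ) (hh : ∀ x, h x = 9 * (x - 2/5)^2)
    (F : ℝ → ℝ → ℝ) (hF : ∀ b X, F b X = h b + 1 + |b - X|) :
    ∀ X : ℝ,
      (X < 31/90 → IsLeast {r : ℝ | ∃ b ∈ Set.Icc (0:ℝ) 1, r = F b X}
        (247/180 - X)) ∧
      (31/90 ≤ X → X ≤ 41/90 → IsLeast {r : ℝ | ∃ b ∈ Set.Icc (0:ℝ) 1, r = F b X}
        (9 * (X - 2/5)^2 + 1)) ∧
      (41/90 < X → IsLeast {r : ℝ | ∃ b ∈ Set.Icc (0:ℝ) 1, r = F b X}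
        (103/180 + X)) := by
  intro X
  refine ⟨?_, ?_, ?_⟩
  · intro hX
    constructor
    · refine ⟨31/90, ⟨by norm_num, by norm_num⟩, ?_⟩
      rw [hF, hh, abs_of_nonneg (by linarith)]
      ring
    · rintro r ⟨b, ⟨hb0, hb1⟩, rfl⟩
      rw [hF, hh]
      rcases abs_cases (b - X) with ⟨he, _⟩ | ⟨he, _⟩ <;> rw [he] <;>
        nlinarith [sq_nonneg (b - 31/90)]
  · intro h1 h2
    constructor
    · refine ⟨X, ⟨by linarith, by linarith⟩, ?_⟩
      rw [hF, hh]
      simp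
    · rintro r ⟨b, ⟨hb0, hb1⟩, rfl⟩
      rw [hF, hh]
      rcases abs_cases (b - X) with ⟨he, hs⟩ | ⟨he, hs⟩ <;> rw [he] <;>
        nlinarith [sq_nonneg (b - X)]
  · intro hX
    constructor
    · refine ⟨41/90, ⟨by norm_num, by norm_num⟩, ?_⟩
      rw [hF, hh, abs_of_nonpos (by linarith)]
      ring
    · rintro r ⟨b, ⟨hb0, hb1⟩, rfl⟩
      rw [hF, hh]
      rcases abs_cases (b - X) with ⟨he, _⟩ | ⟨he, _⟩ <;> rw [he] <;>
        nlinarith [sq_nonneg (b - 41/90)]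
end
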